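/- arXiv:math/0601296 — 6 statements merged into one kernel-verified Lean document; each statement's English description precedes it below -/
import Mathlib

section
/- The map S ↦ B(S) = (S^C/C!)/(∑_{ℓ=0}^C S^ℓ/ℓ!) from [0,∞) to [0,1] is nondecreasing. -/
open Finset

/-- The Erlang blocking probability of an `M/M/C/C` queue with load `S`. -/
noncomputable def erlangB (C : ℕ) (S : ℝ) : ℝ :=
  (S ^ C / (Nat.factorial C : ℝ)) / ∑ l ∈ Finset.range (C + 1), S ^ l / (Nat.factorial l : ℝ)

lemma erlang_sum_pos (C : ℕ) {S : ℝ} (hS : 0 ≤ S) :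
    0 < ∑ l ∈ Finset.range (C + 1), S ^ l / (Nat.factorial l : ℝ) := by
  have h0 : (0:ℕ) ∈ Finset.range (C + 1) := by simp
  have h1 : (1:ℝ) ≤ ∑ l ∈ Finset.range (C + 1), S ^ l / (Nat.factorial l : ℝ) := by
    have := Finset.single_le_sum (f := fun l => S ^ l / (Nat.factorial l : ℝ))
      (fun i _ => by positivity) h0
    simpa using this
  linarith

/-- The map `S ↦ B(S)` is nondecreasing on `[0, ∞)`. -/
theorem erlangB_monotoneOn (C : ℕ) (hC : 0 < C) :
    MonotoneOn (erlangB C) (Set.Ici (0 : ℝ)) := by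
  intro x hx y hy hxy
  simp only [Set.mem_Ici] at hx hy
  have hsx := erlang_sum_pos C hx
  have hsy := erlang_sum_pos C hy
  unfold erlangB
  rw [div_le_div_iff₀ hsx hsy]
  have key : x ^ C * ∑ l ∈ Finset.range (C + 1), y ^ l / (Nat.factorial l : ℝ)
      ≤ y ^ C * ∑ l ∈ Finset.range (C + 1), x ^ l / (Nat.factorial l : ℝ) := by
    rw [Finset.mul_sum, Finset.mul_sum]
    apply Finset.sum_le_sum
    intro l hl
    have hlC : l ≤ C := Nat.lt_succ_iff.mp (Finset.mem_range.mp hl)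
    have hfac : (0:ℝ) < (Nat.factorial l : ℝ) := by positivity
    rw [mul_div_assoc', mul_div_assoc']
    apply div_le_div_of_nonneg_right ?_ hfac.le
    -- x ^ C * y ^ l ≤ y ^ C * x ^ l
    have e1 : x ^ C = x ^ l * x ^ (C - l) := by rw [← pow_add, Nat.add_sub_cancel' hlC]
    have e2 : y ^ C = y ^ l * y ^ (C - l) := by rw [← pow_add, Nat.add_sub_cancel' hlC]
    have h1 : x ^ (C - l) ≤ y ^ (C - l) := pow_le_pow_left₀ hx hxy _
    have h2 : x ^ l * y ^ l * x ^ (C - l) ≤ x ^ l * y ^ l * y ^ (C - l) :=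
      mul_le_mul_of_nonneg_left h1 (mul_nonneg (pow_nonneg hx l) (pow_nonneg hy l))
    rw [e1, e2]
    nlinarith [h2]
  have hfC : (0:ℝ) < (Nat.factorial C : ℝ) := by positivity
  calc x ^ C / (Nat.factorial C : ℝ) * ∑ l ∈ Finset.range (C + 1), y ^ l / (Nat.factorial l : ℝ)
      = (x ^ C * ∑ l ∈ Finset.range (C + 1), y ^ l / (Nat.factorial l : ℝ)) / (Nat.factorial C : ℝ) := by ring
    _ ≤ (y ^ C * ∑ l ∈ Finset.range (C + 1), x ^ l / (Nat.factorial l : ℝ)) / (Nat.factorial C : ℝ) :=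
        div_le_div_of_nonneg_right key hfC.le
    _ = y ^ C / (Nat.factorial C : ℝ) * ∑ l ∈ Finset.range (C + 1), x ^ l / (Nat.factorial l : ℝ) := by ring
end

section
/- For any positive reals λ_1,…,λ_K, μ_1,…,μ_K, γ_1,…,γ_K, the equation S = ∑_{k=1}^K λ_k/(μ_k + γ_k B(S)) has a unique nonnegative solution S, where B is the Erlang blocking function with capacity C. -/
open Finset

lemma erlang_denom_pos (C : ℕ) (S : ℝ) (hS : 0 ≤ S) :
    0 < ∑ l ∈ Finset.range (C + 1), S ^ l / (Nat.factorial l : ℝ) := by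
  refine Finset.sum_pos' (fun l _ => by positivity) ⟨0, Finset.mem_range.mpr (by omega), ?_⟩
  norm_num

lemma erlangB_nonneg (C : ℕ) (S : ℝ) (hS : 0 ≤ S) : 0 ≤ erlangB C S :=
  div_nonneg (by positivity) (erlang_denom_pos C S hS).le

lemma erlangB_mono (C : ℕ) {a b : ℝ} (ha : 0 ≤ a) (hab : a ≤ b) :
    erlangB C a ≤ erlangB C b := by
  have hb : 0 ≤ b := ha.trans hab
  have hDa := erlang_denom_pos C a ha
  have hDb := erlang_denom_pos C b hb
  unfold erlangB
  rw [div_le_div_iff₀ hDa hDb]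
  have key : a ^ C * (∑ l ∈ Finset.range (C + 1), b ^ l / (Nat.factorial l : ℝ)) ≤
      b ^ C * (∑ l ∈ Finset.range (C + 1), a ^ l / (Nat.factorial l : ℝ)) := by
    rw [Finset.mul_sum, Finset.mul_sum]
    apply Finset.sum_le_sum
    intro l hl
    have hlC : l ≤ C := Nat.lt_succ_iff.mp (Finset.mem_range.mp hl)
    rw [mul_div_assoc', mul_div_assoc']
    have hfac : (0:ℝ) < (Nat.factorial l : ℝ) := by positivity
    refine div_le_div_of_nonneg_right ?_ hfac.le
    obtain ⟨m, rfl⟩ : ∃ m, C = l + m := ⟨C - l, by omega⟩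
    calc a ^ (l + m) * b ^ l = a ^ l * b ^ l * a ^ m := by rw [pow_add]; ring
      _ ≤ a ^ l * b ^ l * b ^ m :=
          mul_le_mul_of_nonneg_left (pow_le_pow_left₀ ha hab m) (by positivity)
      _ = b ^ (l + m) * a ^ l := by rw [pow_add]; ring
  calc a ^ C / (Nat.factorial C : ℝ) *
        (∑ l ∈ Finset.range (C + 1), b ^ l / (Nat.factorial l : ℝ))
      = (a ^ C * ∑ l ∈ Finset.range (C + 1), b ^ l / (Nat.factorial l : ℝ)) /
        (Nat.factorial C : ℝ) := by ring
    _ ≤ (b ^ C * ∑ l ∈ Finset.range (C + 1), a ^ l / (Nat.factorial l : ℝ)) /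
        (Nat.factorial C : ℝ) := by
        exact div_le_div_of_nonneg_right key (by positivity)
    _ = b ^ C / (Nat.factorial C : ℝ) *
        (∑ l ∈ Finset.range (C + 1), a ^ l / (Nat.factorial l : ℝ)) := by ring

/-- The equation `S = ∑_k λ_k / (μ_k + γ_k B(S))` has a unique nonnegative solution. -/
theorem fixed_point_unique (K C : ℕ) (hK : 0 < K) (hC : 0 < C)
    (lam mu gam : Fin K → ℝ)
    (hlam : ∀ k, 0 < lam k) (hmu : ∀ k, 0 < mu k) (hgam : ∀ k, 0 < gam k) :
    ∃! S : ℝ, 0 ≤ S ∧ S = ∑ k, lam k / (mu k + gam k * erlangB C S) := by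
  have : Nonempty (Fin K) := Fin.pos_iff_nonempty.mp hK
  set F : ℝ → ℝ := fun S => ∑ k, lam k / (mu k + gam k * erlangB C S) with hF
  have hden : ∀ (k : Fin K) (S : ℝ), 0 ≤ S → 0 < mu k + gam k * erlangB C S := by
    intro k S hS
    have h1 := erlangB_nonneg C S hS
    have h2 := hmu k
    have h3 := hgam k
    nlinarith
  have hFpos : ∀ S, 0 ≤ S → 0 < F S := by
    intro S hS
    exact Finset.sum_pos (fun k _ => div_pos (hlam k) (hden k S hS)) Finset.univ_nonempty
  have hFanti : ∀ a b : ℝ, 0 ≤ a → a ≤ b → F b ≤ F a := by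
    intro a b ha hab
    apply Finset.sum_le_sum
    intro k _
    have hB := erlangB_mono C ha hab
    have h1 := hden k a ha
    apply div_le_div_of_nonneg_left (hlam k).le h1
    have := (hgam k).le
    nlinarith
  set M : ℝ := ∑ k, lam k / mu k with hM
  have hM0 : 0 < M := Finset.sum_pos (fun k _ => div_pos (hlam k) (hmu k)) Finset.univ_nonempty
  have hFle : ∀ S : ℝ, 0 ≤ S → F S ≤ M := by
    intro S hS
    apply Finset.sum_le_sum
    intro k _
    apply div_le_div_of_nonneg_left (hlam k).le (hmu k)
    have h1 := erlangB_nonneg C S hS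
    have := (hgam k).le
    nlinarith
  have hcont : ContinuousOn F (Set.Ici (0:ℝ)) := by
    apply continuousOn_finset_sum
    intro k _
    apply ContinuousOn.div continuousOn_const
    · apply ContinuousOn.add continuousOn_const
      apply ContinuousOn.mul continuousOn_const
      unfold erlangB
      apply ContinuousOn.div
      · exact ((continuous_pow C).div_const _).continuousOn
      · exact (continuous_finset_sum _ fun l _ => (continuous_pow l).div_const _).continuousOn
      · intro S hS; exact (erlang_denom_pos C S hS).ne'
    · intro S hS; exact (hden k S hS).ne'
  have hg : ContinuousOn (fun S => S - F S) (Set.Icc (0:ℝ) M) :=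
    continuousOn_id.sub (hcont.mono Set.Icc_subset_Ici_self)
  have hiv := intermediate_value_Icc hM0.le hg
  have h0mem : (0:ℝ) ∈ Set.Icc ((fun S => S - F S) 0) ((fun S => S - F S) M) := by
    constructor
    · simp only
      have := hFpos 0 le_rfl
      linarith
    · simp only
      have := hFle M hM0.le
      linarith
  obtain ⟨S, hSmem, hSeq⟩ := hiv h0mem
  simp only at hSeq
  have hS0 : 0 ≤ S := hSmem.1
  have hSfix : S = F S := by linarith
  have key : ∀ a b : ℝ, 0 ≤ a → a = F a → b = F b → a ≤ b → b ≤ a := by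
    intro a b ha hfa hfb hab
    calc b = F b := hfb
      _ ≤ F a := hFanti a b ha hab
      _ = a := hfa.symm
  refine ⟨S, ⟨hS0, hSfix⟩, ?_⟩
  intro y hy
  have hy0 : 0 ≤ y := hy.1
  have hyfix : y = F y := hy.2
  rcases le_total y S with h | h
  · exact le_antisymm h (key y S hy0 hyfix hSfix h)
  · exact le_antisymm (key S y hS0 hSfix hyfix h) h
end

section
/- There exists at least one probability distribution y on X that is an equilibrium point of the asymptotic dynamical system, i.e., V(y) = 0. -/
open Finset

/-- The state space `X = {n ∈ ℕ^K : ∑_k A_k n_k ≤ C}` as a `Finset` of `Fin K → ℕ`. -/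
def XF (K C : ℕ) (A : Fin K → ℕ) : Finset (Fin K → ℕ) :=
  (Fintype.piFinset fun _ => Finset.range (C + 1)).filter fun n => ∑ k, A k * n k ≤ C

/-- `⟨I_k, y⟩ = ∑_{m ∈ X} m_k y_m`. -/
noncomputable def avgI (K C : ℕ) (A : Fin K → ℕ) (y : (Fin K → ℕ) → ℝ) (k : Fin K) : ℝ :=
  ∑ n ∈ XF K C A, (n k : ℝ) * y n

/-- The limiting vector field `V` of the network dynamics. -/
noncomputable def Vf (K C : ℕ) (A : Fin K → ℕ) (lam gam mu : Fin K → ℝ)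
    (y : (Fin K → ℕ) → ℝ) (n : Fin K → ℕ) : ℝ :=
  (∑ k, (lam k + gam k * avgI K C A y k) *
      ((if 1 ≤ n k then y (n - Pi.single k 1) else 0)
        - (if n + Pi.single k 1 ∈ XF K C A then y n else 0)))
  + ∑ k, (gam k + mu k) *
      (((n k : ℝ) + 1) * (if n + Pi.single k 1 ∈ XF K C A then y (n + Pi.single k 1) else 0)
        - (n k : ℝ) * y n)

/-!
The equilibrium is found in product form. For `θ ∈ ℝ^K` let `y_θ` be the distribution on `X`
proportional to `∏_k e^{θ_k n_k} / n_k!`. It satisfies the partial balance relations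
`e^{θ_k} y_θ(n) = (n_k + 1) y_θ(n + f_k)` whenever `n, n + f_k ∈ X`; as `X` is closed under
decrementing a coordinate, these cancel `V(y_θ)` term by term as soon as
`λ_k + γ_k ⟨I_k, y_θ⟩ = (γ_k + μ_k) e^{θ_k}` for all `k`.
Since `∂_k log Z(θ) = ⟨I_k, y_θ⟩` for the normalising constant `Z`, these are the critical point
equations of `Φ(θ) = ∑_k (a_k e^{θ_k} - b_k θ_k) - log Z(θ)` with `a_k = (γ_k + μ_k) / γ_k` and
`b_k = λ_k / γ_k`. As `log Z(θ) ≤ log |X| + C ∑_k max(θ_k, 0)`, `Φ` is coercive, and a global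
minimiser of `Φ` gives the equilibrium; no fixed point theorem is needed.
-/

open Real Filter
open scoped Nat

section ProductForm

variable {K : ℕ}

noncomputable def productWeight (θ : Fin K → ℝ) (n : Fin K → ℕ) : ℝ :=
  exp (∑ j, θ j * n j) / ∏ j, ((n j)! : ℝ)

lemma productWeight_pos (θ : Fin K → ℝ) (n : Fin K → ℕ) : 0 < productWeight θ n :=
  div_pos (exp_pos _) (prod_pos fun j _ => mod_cast (n j).factorial_pos)

lemma sum_apply_add_single (f : Fin K → ℝ → ℝ) (θ : Fin K → ℝ) (k : Fin K) (t : ℝ) :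
    ∑ j, f j ((θ + Pi.single k t : Fin K → ℝ) j) =
      ∑ j, f j (θ j) + (f k (θ k + t) - f k (θ k)) := by
  rw [Fintype.sum_eq_add_sum_compl k, Fintype.sum_eq_add_sum_compl k (fun j => f j (θ j)),
    sum_congr rfl fun j hj => by
      rw [Pi.add_apply, Pi.single_eq_of_ne (by simpa using hj), add_zero]]
  simp only [Pi.add_apply, Pi.single_eq_same]
  ring

lemma sum_add_single_mul (θ : Fin K → ℝ) (n : Fin K → ℕ) (k : Fin K) (t : ℝ) :
    ∑ j, (θ + Pi.single k t : Fin K → ℝ) j * n j = ∑ j, θ j * n j + t * n k := by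
  rw [sum_apply_add_single (fun j s => s * n j)]
  ring

lemma productWeight_add_single_mul (θ : Fin K → ℝ) (n : Fin K → ℕ) (k : Fin K) :
    productWeight θ (n + Pi.single k 1) * (n k + 1) = exp (θ k) * productWeight θ n := by
  have hsum : ∑ j, θ j * ((n + Pi.single k 1 : Fin K → ℕ) j : ℝ) = ∑ j, θ j * n j + θ k := by
    simp [Pi.single_apply, mul_add, sum_add_distrib]
  have hprod : ∏ j, (((n + Pi.single k 1 : Fin K → ℕ) j)! : ℝ) = (n k + 1) * ∏ j, ((n j)! : ℝ) := by
    rw [Fintype.prod_eq_mul_prod_compl k, Fintype.prod_eq_mul_prod_compl k (fun j => ((n j)! : ℝ)),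
      prod_congr rfl fun j hj => by
        rw [Pi.add_apply, Pi.single_eq_of_ne (by simpa using hj), add_zero]]
    simp only [Pi.add_apply, Pi.single_eq_same, Nat.factorial_succ, Nat.cast_mul, Nat.cast_add,
      Nat.cast_one]
    ring
  have hn : (n k + 1 : ℝ) ≠ 0 := by positivity
  have hf : ∏ j, ((n j)! : ℝ) ≠ 0 := prod_ne_zero_iff.2 fun j _ => by positivity
  rw [productWeight, productWeight, hsum, hprod, exp_add]
  field_simp

noncomputable def partitionFunction (S : Finset (Fin K → ℕ)) (θ : Fin K → ℝ) : ℝ :=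
  ∑ n ∈ S, productWeight θ n

variable {S : Finset (Fin K → ℕ)}

lemma partitionFunction_pos (hS : S.Nonempty) (θ : Fin K → ℝ) : 0 < partitionFunction S θ :=
  sum_pos (fun n _ => productWeight_pos θ n) hS

lemma continuous_partitionFunction (S : Finset (Fin K → ℕ)) : Continuous (partitionFunction S) := by
  unfold partitionFunction productWeight
  fun_prop

lemma hasDerivAt_partitionFunction_add_single (S : Finset (Fin K → ℕ)) (θ : Fin K → ℝ)
    (k : Fin K) :
    HasDerivAt (fun t => partitionFunction S (θ + Pi.single k t))
      (∑ n ∈ S, (n k : ℝ) * productWeight θ n) 0 := by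
  unfold partitionFunction productWeight
  simp only [sum_add_single_mul]
  refine HasDerivAt.fun_sum fun n _ => ?_
  have h := (((hasDerivAt_mul_const (x := 0) (n k : ℝ)).const_add
    (∑ j, θ j * (n j : ℝ))).exp).div_const (∏ j, ((n j)! : ℝ))
  rw [zero_mul, add_zero] at h
  exact h.congr_deriv (by ring)

lemma partitionFunction_le {M : ℕ} (hM : ∀ n ∈ S, ∀ k, n k ≤ M) (θ : Fin K → ℝ) :
    partitionFunction S θ ≤ #S * exp (M * ∑ k, max (θ k) 0) := by
  rw [← nsmul_eq_mul, ← sum_const]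
  refine sum_le_sum fun n hn => ?_
  calc productWeight θ n ≤ exp (∑ j, θ j * n j) :=
        div_le_self (exp_nonneg _) (one_le_prod fun j _ => mod_cast (n j).factorial_pos)
    _ ≤ exp (M * ∑ k, max (θ k) 0) := by
        rw [exp_le_exp, mul_sum]
        refine sum_le_sum fun j _ => ?_
        have hnj : (n j : ℝ) ≤ M := mod_cast hM n hn j
        calc θ j * n j ≤ max (θ j) 0 * n j := by gcongr; exact le_max_left _ _
          _ ≤ max (θ j) 0 * M := by gcongr
          _ = M * max (θ j) 0 := mul_comm _ _

end ProductForm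

section Gibbs

variable {K : ℕ} {S : Finset (Fin K → ℕ)} {θ : Fin K → ℝ}

noncomputable def gibbs (S : Finset (Fin K → ℕ)) (θ : Fin K → ℝ) (n : Fin K → ℕ) : ℝ :=
  if n ∈ S then productWeight θ n / partitionFunction S θ else 0

lemma gibbs_of_notMem {n : Fin K → ℕ} (hn : n ∉ S) : gibbs S θ n = 0 := if_neg hn

lemma gibbs_nonneg (n : Fin K → ℕ) : 0 ≤ gibbs S θ n := by
  unfold gibbs
  split_ifs with hn
  · exact (div_pos (productWeight_pos θ n) (partitionFunction_pos ⟨n, hn⟩ θ)).le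
  · exact le_rfl

lemma sum_gibbs (hS : S.Nonempty) (θ : Fin K → ℝ) : ∑ n ∈ S, gibbs S θ n = 1 := by
  rw [← div_self (partitionFunction_pos hS θ).ne', partitionFunction, sum_div]
  exact sum_congr rfl fun n hn => if_pos hn

lemma sum_mul_gibbs (θ : Fin K → ℝ) (k : Fin K) :
    ∑ n ∈ S, (n k : ℝ) * gibbs S θ n =
      (∑ n ∈ S, (n k : ℝ) * productWeight θ n) / partitionFunction S θ := by
  rw [sum_div]
  exact sum_congr rfl fun n hn => by rw [gibbs, if_pos hn, mul_div_assoc]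

lemma gibbs_add_single_mul {n : Fin K → ℕ} {k : Fin K} (hn : n ∈ S)
    (hnk : n + Pi.single k 1 ∈ S) :
    gibbs S θ (n + Pi.single k 1) * (n k + 1) = exp (θ k) * gibbs S θ n := by
  rw [gibbs, gibbs, if_pos hn, if_pos hnk, div_mul_eq_mul_div, productWeight_add_single_mul,
    mul_div_assoc]

lemma exp_mul_ite_gibbs_add_single {n : Fin K → ℕ} (hn : n ∈ S) (k : Fin K) :
    exp (θ k) * (if n + Pi.single k 1 ∈ S then gibbs S θ n else 0) =
      (n k + 1) * (if n + Pi.single k 1 ∈ S then gibbs S θ (n + Pi.single k 1) else 0) := by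
  split_ifs with hnk
  · rw [← gibbs_add_single_mul hn hnk, mul_comm]
  · simp

lemma exp_mul_ite_gibbs_sub_single (hdown : ∀ n ∈ S, ∀ k, n - Pi.single k 1 ∈ S) {n : Fin K → ℕ}
    (hn : n ∈ S) (k : Fin K) :
    exp (θ k) * (if 1 ≤ n k then gibbs S θ (n - Pi.single k 1) else 0) = n k * gibbs S θ n := by
  split_ifs with hnk
  · have hle : Pi.single k 1 ≤ n := fun j => by
      rcases eq_or_ne j k with rfl | hj
      · simpa using hnk
      · simp [Pi.single_eq_of_ne hj]
    have hadd : n - Pi.single k 1 + Pi.single k 1 = n := tsub_add_cancel_of_le hle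
    have h := gibbs_add_single_mul (θ := θ) (hdown n hn k) (hadd ▸ hn)
    rw [hadd] at h
    rw [← h, mul_comm]
    simp [Nat.cast_sub hnk]
  · simp [show n k = 0 by omega]

end Gibbs

section Potential

variable {K : ℕ} {S : Finset (Fin K → ℕ)} {a b : Fin K → ℝ}

noncomputable def gibbsPotential (S : Finset (Fin K → ℕ)) (a b θ : Fin K → ℝ) : ℝ :=
  ∑ k, (a k * exp (θ k) - b k * θ k) - log (partitionFunction S θ)

lemma continuous_gibbsPotential (hS : S.Nonempty) (a b : Fin K → ℝ) :
    Continuous (gibbsPotential S a b) :=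
  (continuous_finsetSum _ fun k _ => by fun_prop).sub
    ((continuous_partitionFunction S).log fun θ => (partitionFunction_pos hS θ).ne')

lemma hasDerivAt_gibbsPotential_add_single (hS : S.Nonempty) (a b θ : Fin K → ℝ) (k : Fin K) :
    HasDerivAt (fun t => gibbsPotential S a b (θ + Pi.single k t))
      (a k * exp (θ k) - b k - (∑ n ∈ S, (n k : ℝ) * productWeight θ n) / partitionFunction S θ)
      0 := by
  have hcoord : HasDerivAt (fun t => a k * exp (θ k + t) - b k * (θ k + t))
      (a k * exp (θ k) - b k) 0 := by
    have h := (((hasDerivAt_id (0 : ℝ)).const_add (θ k)).exp.const_mul (a k)).fun_sub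
      (((hasDerivAt_id (0 : ℝ)).const_add (θ k)).const_mul (b k))
    simpa using h
  have hlog := (hasDerivAt_partitionFunction_add_single S θ k).log
    (by simpa using (partitionFunction_pos hS θ).ne')
  simp only [add_zero, Pi.single_zero] at hlog
  unfold gibbsPotential
  simp only [sum_apply_add_single (fun j s => a j * exp s - b j * s)]
  exact ((hcoord.sub_const _).const_add _).sub hlog

lemma min_mul_abs_sub_le_mul_exp_sub (M : ℝ) {a : ℝ} (ha : 0 < a) (b t : ℝ) :
    min b 1 * |t| - (b + M + 1) ^ 2 / a ≤ a * exp t - b * t - M * max t 0 := by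
  have hE : a * ((b + M + 1) ^ 2 / a) = (b + M + 1) ^ 2 := mul_div_cancel₀ _ ha.ne'
  rcases le_total t 0 with ht | ht
  · rw [max_eq_right ht, abs_of_nonpos ht]
    have hE0 : 0 ≤ (b + M + 1) ^ 2 / a := by positivity
    nlinarith [mul_le_mul_of_nonneg_right (min_le_left b 1) (neg_nonneg.2 ht), exp_pos t]
  · rw [max_eq_left ht, abs_of_nonneg ht]
    have hexp : a * (t ^ 2 / 2) ≤ a * exp t :=
      mul_le_mul_of_nonneg_left (by nlinarith [quadratic_le_exp_of_nonneg ht]) ha.le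
    have hquad : (b + M + 1) * t - (b + M + 1) ^ 2 / a ≤ a * (t ^ 2 / 2) := by
      have h : 0 ≤ a * (a * (t ^ 2 / 2) - (b + M + 1) * t + (b + M + 1) ^ 2 / a) := by
        nlinarith [sq_nonneg (a * t - (b + M + 1))]
      linarith [(mul_nonneg_iff_of_pos_left ha).1 h]
    nlinarith [mul_le_of_le_one_left ht (min_le_right b 1)]

lemma log_partitionFunction_le (hS : S.Nonempty) {M : ℕ} (hM : ∀ n ∈ S, ∀ k, n k ≤ M)
    (θ : Fin K → ℝ) :
    log (partitionFunction S θ) ≤ log #S + M * ∑ k, max (θ k) 0 := by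
  have hcard : (0 : ℝ) < #S := mod_cast hS.card_pos
  calc log (partitionFunction S θ) ≤ log (#S * exp (M * ∑ k, max (θ k) 0)) :=
        log_le_log (partitionFunction_pos hS θ) (partitionFunction_le hM θ)
    _ = log #S + M * ∑ k, max (θ k) 0 := by rw [log_mul hcard.ne' (exp_pos _).ne', log_exp]

lemma tendsto_gibbsPotential_cocompact (hS : S.Nonempty) {M : ℕ} (hM : ∀ n ∈ S, ∀ k, n k ≤ M)
    (ha : ∀ k, 0 < a k) (hb : ∀ k, 0 < b k) :
    Tendsto (gibbsPotential S a b) (cocompact _) atTop := by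
  set E := ∑ j, (b j + M + 1) ^ 2 / a j + log #S
  have hlow : ∀ θ k, min (b k) 1 * |θ k| - E ≤ gibbsPotential S a b θ := by
    intro θ k
    have hcoord := sum_le_sum fun j (_ : j ∈ univ) =>
      min_mul_abs_sub_le_mul_exp_sub M (ha j) (b j) (θ j)
    have hk : min (b k) 1 * |θ k| ≤ ∑ j, min (b j) 1 * |θ j| :=
      single_le_sum (f := fun j => min (b j) 1 * |θ j|)
        (fun j _ => mul_nonneg (le_min (hb j).le zero_le_one) (abs_nonneg _)) (mem_univ k)
    simp only [sum_sub_distrib, ← mul_sum] at hcoord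
    have := log_partitionFunction_le hS hM θ
    rw [gibbsPotential, sum_sub_distrib]
    linarith
  -- `cocompact` on a product is the coproduct of the coordinate `cocompact` filters
  rw [← coprodᵢ_cocompact, Filter.coprodᵢ, tendsto_iSup]
  intro k
  refine tendsto_atTop_mono (hlow · k) (tendsto_atTop_add_const_right _ _ ?_)
  exact (tendsto_norm_cocompact_atTop.comp tendsto_comap).const_mul_atTop
    (lt_min (hb k) one_pos)

lemma exists_sum_mul_gibbs_eq (hS : S.Nonempty) {M : ℕ} (hM : ∀ n ∈ S, ∀ k, n k ≤ M)
    (ha : ∀ k, 0 < a k) (hb : ∀ k, 0 < b k) :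
    ∃ θ : Fin K → ℝ, ∀ k, ∑ n ∈ S, (n k : ℝ) * gibbs S θ n = a k * exp (θ k) - b k := by
  obtain ⟨θ, hθ⟩ := (continuous_gibbsPotential hS a b).exists_forall_le
    (tendsto_gibbsPotential_cocompact hS hM ha hb)
  refine ⟨θ, fun k => ?_⟩
  have hmin : IsLocalMin (fun t => gibbsPotential S a b (θ + Pi.single k t)) 0 :=
    Eventually.of_forall fun t => by
      simp only [Pi.single_zero, add_zero]
      exact hθ _
  rw [sum_mul_gibbs]
  linarith [hmin.hasDerivAt_eq_zero (hasDerivAt_gibbsPotential_add_single hS a b θ k)]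

end Potential

lemma zero_mem_XF (K C : ℕ) (A : Fin K → ℕ) : 0 ∈ XF K C A := by
  simp [XF]

lemma le_of_mem_XF {K C : ℕ} {A : Fin K → ℕ} {n : Fin K → ℕ} (hn : n ∈ XF K C A) (k : Fin K) :
    n k ≤ C := by
  simp only [XF, mem_filter, Fintype.mem_piFinset, mem_range] at hn
  exact Nat.lt_succ_iff.1 (hn.1 k)

lemma sub_single_mem_XF {K C : ℕ} {A : Fin K → ℕ} {n : Fin K → ℕ} (hn : n ∈ XF K C A)
    (k : Fin K) : n - Pi.single k 1 ∈ XF K C A := by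
  have hle : n - Pi.single k 1 ≤ n := tsub_le_self
  simp only [XF, mem_filter, Fintype.mem_piFinset, mem_range] at hn ⊢
  exact ⟨fun j => (hle j).trans_lt (hn.1 j),
    (sum_le_sum fun j _ => Nat.mul_le_mul_left _ (hle j)).trans hn.2⟩

lemma Vf_gibbs_eq_zero {K C : ℕ} {A : Fin K → ℕ} {lam gam mu θ : Fin K → ℝ}
    (hrate : ∀ k, lam k + gam k * avgI K C A (gibbs (XF K C A) θ) k = (gam k + mu k) * exp (θ k))
    {n : Fin K → ℕ} (hn : n ∈ XF K C A) :
    Vf K C A lam gam mu (gibbs (XF K C A) θ) n = 0 := by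
  rw [Vf, ← sum_add_distrib]
  refine sum_eq_zero fun k _ => ?_
  rw [hrate k]
  linear_combination (gam k + mu k) *
    (exp_mul_ite_gibbs_sub_single (fun _ hm => sub_single_mem_XF hm) hn k -
      exp_mul_ite_gibbs_add_single hn k)

theorem equilibrium_exists_general (K C : ℕ) (A : Fin K → ℕ) (lam gam mu : Fin K → ℝ)
    (hlam : ∀ k, 0 < lam k) (hgam : ∀ k, 0 < gam k) (hmu : ∀ k, 0 ≤ mu k) :
    ∃ y : (Fin K → ℕ) → ℝ,
      (∀ n ∉ XF K C A, y n = 0) ∧ (∀ n, 0 ≤ y n) ∧ (∑ n ∈ XF K C A, y n = 1) ∧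
      ∀ n ∈ XF K C A, Vf K C A lam gam mu y n = 0 := by
  have hX : (XF K C A).Nonempty := ⟨0, zero_mem_XF K C A⟩
  obtain ⟨θ, hθ⟩ := exists_sum_mul_gibbs_eq (a := fun k => (gam k + mu k) / gam k)
    (b := fun k => lam k / gam k) hX (fun _ => le_of_mem_XF)
    (fun k => div_pos (add_pos_of_pos_of_nonneg (hgam k) (hmu k)) (hgam k))
    (fun k => div_pos (hlam k) (hgam k))
  refine ⟨gibbs (XF K C A) θ, fun n => gibbs_of_notMem, gibbs_nonneg, sum_gibbs hX θ,
    fun n => Vf_gibbs_eq_zero fun k => ?_⟩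
  have hgk := (hgam k).ne'
  rw [avgI, hθ k]
  field_simp
  ring

/-- There exists at least one probability distribution `y` on `X` with `V(y) = 0`. -/
theorem equilibrium_exists (K C : ℕ) (hK : 0 < K) (hC : 0 < C)
    (A : Fin K → ℕ) (hA : ∀ k, 0 < A k)
    (lam gam mu : Fin K → ℝ)
    (hlam : ∀ k, 0 < lam k) (hgam : ∀ k, 0 < gam k) (hmu : ∀ k, 0 ≤ mu k) :
    ∃ y : (Fin K → ℕ) → ℝ,
      (∀ n ∉ XF K C A, y n = 0) ∧ (∀ n, 0 ≤ y n) ∧ (∑ n ∈ XF K C A, y n = 1) ∧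
      ∀ n ∈ XF K C A, Vf K C A lam gam mu y n = 0 :=
  equilibrium_exists_general K C A lam gam mu hlam hgam hmu
end

section
/- For ρ ∈ (0,∞)^K, the gradient of φ(ρ) = −log Z(ρ) + ∑_k (β_k ρ_k − α_k log ρ_k) vanishes at ρ if and only if ρ satisfies the fixed point equations λ_k = ρ_k(μ_k + γ_k B_k(ρ)) for all k, where B_k(ρ) = (∑_{n: n+f_k∉X} ρ^n/n!)/Z(ρ). -/
/-! With the other coordinates fixed, `Z` is a polynomial in `ρ_k`. Because `X` is a lower set,
`m ↦ m + f_k` maps `{m ∈ X : m + f_k ∈ X}` bijectively onto `{n ∈ X : n_k ≥ 1}`, so differentiating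
`ρ^n/n!` termwise gives `∂_k Z = ∑_{m ∈ X, m + f_k ∈ X} ρ^m/m! = Z (1 - B_k)`. Hence
`∂_k φ = -(1 - B_k) + β_k - α_k/ρ_k = (μ_k + γ_k B_k - λ_k/ρ_k)/γ_k`, which vanishes exactly when
`λ_k = ρ_k (μ_k + γ_k B_k)`. -/

open Finset

/-- The partition function `Z(ρ) = ∑_{n ∈ X} ρ^n/n!`. -/
noncomputable def Zf (K C : ℕ) (A : Fin K → ℕ) (ρ : Fin K → ℝ) : ℝ :=
  ∑ n ∈ XF K C A, ∏ j, ρ j ^ n j / (Nat.factorial (n j) : ℝ)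

/-- The blocking probability `B_k(ρ) = (∑_{n ∈ X : n+f_k ∉ X} ρ^n/n!)/Z(ρ)`. -/
noncomputable def Bk (K C : ℕ) (A : Fin K → ℕ) (ρ : Fin K → ℝ) (k : Fin K) : ℝ :=
  (∑ n ∈ (XF K C A).filter (fun n => n + Pi.single k 1 ∉ XF K C A),
      ∏ j, ρ j ^ n j / (Nat.factorial (n j) : ℝ)) / Zf K C A ρ

/-- The energy function `φ(ρ) = −log Z(ρ) + ∑_k (β_k ρ_k − α_k log ρ_k)` with
`α_k = λ_k/γ_k` and `β_k = (γ_k + μ_k)/γ_k`. -/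
noncomputable def phiE (K C : ℕ) (A : Fin K → ℕ) (lam gam mu : Fin K → ℝ)
    (ρ : Fin K → ℝ) : ℝ :=
  -Real.log (Zf K C A ρ) +
    ∑ k, ((gam k + mu k) / gam k * ρ k - lam k / gam k * Real.log (ρ k))

section
variable {ι : Type*} [Fintype ι] [DecidableEq ι]

noncomputable def powDivFactorial (ρ : ι → ℝ) (n : ι → ℕ) : ℝ :=
  ∏ j, ρ j ^ n j / (n j).factorial

lemma powDivFactorial_update_of_eq_zero {ρ : ι → ℝ} {n : ι → ℕ} {k : ι} (hn : n k = 0)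
    (t : ℝ) : powDivFactorial (Function.update ρ k t) n = powDivFactorial ρ n := by
  refine prod_congr rfl fun j _ => ?_
  rcases eq_or_ne j k with rfl | hj
  · simp [hn]
  · rw [Function.update_of_ne hj]

lemma hasDerivAt_pow_succ_div_factorial (m : ℕ) (x : ℝ) :
    HasDerivAt (fun t : ℝ => t ^ (m + 1) / (m + 1).factorial) (x ^ m / m.factorial) x := by
  refine ((hasDerivAt_pow (m + 1) x).div_const _).congr_deriv ?_
  rw [Nat.factorial_succ]
  push_cast
  field_simp

lemma hasDerivAt_powDivFactorial_update_add_single (ρ : ι → ℝ) (k : ι) (m : ι → ℕ) :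
    HasDerivAt (fun t => powDivFactorial (Function.update ρ k t) (m + Pi.single k 1))
      (powDivFactorial ρ m) (ρ k) := by
  set P := ∏ j ∈ {k}ᶜ, ρ j ^ m j / (m j).factorial
  have hP (t : ℝ) : ∏ j ∈ {k}ᶜ, Function.update ρ k t j ^ (m + Pi.single k 1 : ι → ℕ) j /
      ((m + Pi.single k 1 : ι → ℕ) j).factorial = P :=
    prod_congr rfl fun j hj => by
      have hjk : j ≠ k := by simpa using hj
      simp [hjk]
  rw [show powDivFactorial ρ m = ρ k ^ m k / (m k).factorial * P from
    Fintype.prod_eq_mul_prod_compl k _]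
  simp only [powDivFactorial, Fintype.prod_eq_mul_prod_compl k, hP]
  simpa using (hasDerivAt_pow_succ_div_factorial (m k) (ρ k)).mul_const P

lemma sum_eq_sum_filter_eq_zero_add_sum_add_single {M : Type*} [AddCommMonoid M]
    {X : Finset (ι → ℕ)} (hX : IsLowerSet (X : Set (ι → ℕ))) (k : ι) (g : (ι → ℕ) → M) :
    ∑ n ∈ X, g n = ∑ n ∈ X with n k = 0, g n +
      ∑ m ∈ X with m + Pi.single k 1 ∈ X, g (m + Pi.single k 1) := by
  rw [← sum_filter_add_sum_filter_not X (fun n => n k = 0)]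
  congr 1
  have hcancel {n : ι → ℕ} (hn : n k ≠ 0) : n - Pi.single k 1 + Pi.single k 1 = n := by
    ext j
    rcases eq_or_ne j k with rfl | hj
    · simp; omega
    · simp [hj]
  refine sum_nbij' (· - Pi.single k 1) (· + Pi.single k 1) ?_ ?_ ?_ ?_ ?_
  · intro n hn
    simp only [mem_filter] at hn ⊢
    exact ⟨hX tsub_le_self hn.1, by rw [hcancel hn.2]; exact hn.1⟩
  · intro m hm
    simp only [mem_filter] at hm ⊢
    exact ⟨hm.2, by simp⟩
  · intro n hn
    exact hcancel (mem_filter.mp hn).2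
  · intro m _
    simp
  · intro n hn
    simp only [hcancel (mem_filter.mp hn).2]

lemma hasDerivAt_sum_powDivFactorial_update {X : Finset (ι → ℕ)}
    (hX : IsLowerSet (X : Set (ι → ℕ))) (ρ : ι → ℝ) (k : ι) :
    HasDerivAt (fun t => ∑ n ∈ X, powDivFactorial (Function.update ρ k t) n)
      (∑ n ∈ X with n + Pi.single k 1 ∈ X, powDivFactorial ρ n) (ρ k) := by
  simp only [sum_eq_sum_filter_eq_zero_add_sum_add_single hX k]
  have hconst : ∀ t, ∑ n ∈ X with n k = 0, powDivFactorial (Function.update ρ k t) n =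
      ∑ n ∈ X with n k = 0, powDivFactorial ρ n := fun t =>
    sum_congr rfl fun n hn => powDivFactorial_update_of_eq_zero (mem_filter.mp hn).2 t
  simp only [hconst]
  exact (HasDerivAt.fun_sum fun m _ =>
    hasDerivAt_powDivFactorial_update_add_single ρ k m).const_add _

lemma hasDerivAt_sum_apply_update (g : ι → ℝ → ℝ) (ρ : ι → ℝ) (k : ι) {g' : ℝ}
    (hg : HasDerivAt (g k) g' (ρ k)) :
    HasDerivAt (fun t => ∑ j, g j (Function.update ρ k t j)) g' (ρ k) := by
  have hsplit (t : ℝ) : ∑ j, g j (Function.update ρ k t j) =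
      g k t + ∑ j ∈ {k}ᶜ, g j (ρ j) := by
    rw [Fintype.sum_eq_add_sum_compl k, Function.update_self]
    congr 1
    exact sum_congr rfl fun j hj => by rw [Function.update_of_ne (by simpa using hj)]
  simpa only [hsplit] using hg.add_const _

end

lemma isLowerSet_XF (K C : ℕ) (A : Fin K → ℕ) : IsLowerSet (XF K C A : Set (Fin K → ℕ)) := by
  intro m n hnm hm
  simp only [XF, coe_filter, Set.mem_ofPred_eq, Fintype.mem_piFinset, mem_range] at hm ⊢
  exact ⟨fun j => (hnm j).trans_lt (hm.1 j),
    (sum_le_sum fun j _ => Nat.mul_le_mul_left _ (hnm j)).trans hm.2⟩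

lemma Zf_pos (K C : ℕ) (A : Fin K → ℕ) {ρ : Fin K → ℝ} (hρ : ∀ j, 0 < ρ j) :
    0 < Zf K C A ρ := by
  refine sum_pos' (fun n _ => prod_nonneg fun j _ => by have := hρ j; positivity) ⟨0, ?_, by simp⟩
  simp [XF]

lemma hasDerivAt_Zf_update (K C : ℕ) (A : Fin K → ℕ) {ρ : Fin K → ℝ} (hρ : ∀ j, 0 < ρ j)
    (k : Fin K) :
    HasDerivAt (fun t => Zf K C A (Function.update ρ k t))
      (Zf K C A ρ * (1 - Bk K C A ρ k)) (ρ k) := by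
  have hZ := (Zf_pos K C A hρ).ne'
  have hsplit := sum_filter_add_sum_filter_not (XF K C A)
    (fun n => n + Pi.single k 1 ∈ XF K C A) (powDivFactorial ρ)
  refine (hasDerivAt_sum_powDivFactorial_update (isLowerSet_XF K C A) ρ k).congr_deriv ?_
  unfold Bk
  rw [mul_one_sub, mul_div_cancel₀ _ hZ]
  exact eq_sub_of_add_eq hsplit

lemma hasDerivAt_phiE_update (K C : ℕ) (A : Fin K → ℕ) (lam gam mu : Fin K → ℝ)
    {ρ : Fin K → ℝ} (hρ : ∀ j, 0 < ρ j) {k : Fin K} (hgam : gam k ≠ 0) :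
    HasDerivAt (fun t => phiE K C A lam gam mu (Function.update ρ k t))
      ((mu k + gam k * Bk K C A ρ k - lam k / ρ k) / gam k) (ρ k) := by
  have hZ := (Zf_pos K C A hρ).ne'
  have hlogZ := (hasDerivAt_Zf_update K C A hρ k).log (by rwa [Function.update_eq_self])
  rw [Function.update_eq_self, mul_div_cancel_left₀ _ hZ] at hlogZ
  have hlin : HasDerivAt (fun t => (gam k + mu k) / gam k * t - lam k / gam k * Real.log t)
      ((gam k + mu k) / gam k * 1 - lam k / gam k * (ρ k)⁻¹) (ρ k) :=
    ((hasDerivAt_id _).const_mul _).sub ((Real.hasDerivAt_log (hρ k).ne').const_mul _)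
  refine (hlogZ.neg.add (hasDerivAt_sum_apply_update
    (fun j x => (gam j + mu j) / gam j * x - lam j / gam j * Real.log x) ρ k hlin)).congr_deriv ?_
  field_simp
  ring

theorem grad_phi_eq_zero_iff_general (K C : ℕ)
    (A : Fin K → ℕ)
    (lam gam mu : Fin K → ℝ)
    (hgam : ∀ k, 0 < gam k)
    (ρ : Fin K → ℝ) (hρ : ∀ j, 0 < ρ j) :
    (∀ k, HasDerivAt (fun t : ℝ => phiE K C A lam gam mu (Function.update ρ k t)) 0 (ρ k)) ↔
      ∀ k, lam k = ρ k * (mu k + gam k * Bk K C A ρ k) := by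
  refine forall_congr' fun k => ?_
  have hd := hasDerivAt_phiE_update K C A lam gam mu hρ (hgam k).ne'
  rw [show lam k = ρ k * (mu k + gam k * Bk K C A ρ k) ↔
      (mu k + gam k * Bk K C A ρ k - lam k / ρ k) / gam k = 0 by
    rw [div_eq_zero_iff, sub_eq_zero, eq_div_iff (hρ k).ne', or_iff_left (hgam k).ne', mul_comm,
      eq_comm]]
  exact ⟨fun h => (h.unique hd).symm, fun h => h ▸ hd⟩

/-- `∇φ(ρ) = 0` iff `ρ` satisfies the fixed point equations
`λ_k = ρ_k (μ_k + γ_k B_k(ρ))` for all `k`. -/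
theorem grad_phi_eq_zero_iff (K C : ℕ) (hK : 0 < K) (hC : 0 < C)
    (A : Fin K → ℕ) (hA : ∀ j, 0 < A j)
    (lam gam mu : Fin K → ℝ)
    (hlam : ∀ k, 0 < lam k) (hgam : ∀ k, 0 < gam k) (hmu : ∀ k, 0 ≤ mu k)
    (ρ : Fin K → ℝ) (hρ : ∀ j, 0 < ρ j) :
    (∀ k, HasDerivAt (fun t : ℝ => phiE K C A lam gam mu (Function.update ρ k t)) 0 (ρ k)) ↔
      ∀ k, lam k = ρ k * (mu k + gam k * Bk K C A ρ k) :=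
  grad_phi_eq_zero_iff_general K C A lam gam mu hgam ρ hρ
end

section
/- For y in the interior of P(X), ⟨V(y), ∇g(y)⟩ = 0 if and only if V(y) = 0, i.e., y is an equilibrium point of the dynamical system. -/
open Finset

/-- Extension of `y : X → ℝ` by `0` outside `X`. -/
noncomputable def ye (K C : ℕ) (A : Fin K → ℕ) (y : XF K C A → ℝ) (m : Fin K → ℕ) : ℝ :=
  if h : m ∈ XF K C A then y ⟨m, h⟩ else 0

/-- `⟨I_k, y⟩ = ∑_{m ∈ X} m_k y_m`. -/
noncomputable def avgS (K C : ℕ) (A : Fin K → ℕ) (y : XF K C A → ℝ) (k : Fin K) : ℝ :=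
  ∑ n : XF K C A, (n.1 k : ℝ) * y n

/-- The limiting vector field `V` on `P(X)`. -/
noncomputable def Vs (K C : ℕ) (A : Fin K → ℕ) (lam gam mu : Fin K → ℝ)
    (y : XF K C A → ℝ) (n : XF K C A) : ℝ :=
  (∑ k, (lam k + gam k * avgS K C A y k) *
      ((if 1 ≤ n.1 k then ye K C A y (n.1 - Pi.single k 1) else 0)
        - (if n.1 + Pi.single k 1 ∈ XF K C A then y n else 0)))
  + ∑ k, (gam k + mu k) *
      (((n.1 k : ℝ) + 1) *
          (if n.1 + Pi.single k 1 ∈ XF K C A then ye K C A y (n.1 + Pi.single k 1) else 0)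
        - (n.1 k : ℝ) * y n)

/-- The energy function
`g(y) = ∑_{n∈X} y_n log(n! y_n) − ∑_k ∫_0^{⟨I_k,y⟩} log((λ_k+γ_k x)/(μ_k+γ_k)) dx`. -/
noncomputable def gE (K C : ℕ) (A : Fin K → ℕ) (lam gam mu : Fin K → ℝ)
    (y : XF K C A → ℝ) : ℝ :=
  (∑ n : XF K C A, y n * Real.log ((∏ k, (Nat.factorial (n.1 k) : ℝ)) * y n))
  - ∑ k, ∫ x in (0:ℝ)..(avgS K C A y k), Real.log ((lam k + gam k * x) / (mu k + gam k))

/-!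
Along each edge `m → m + e_k` of `X` the net probability flux is `a - b`, the difference of the
birth flow `a = (λ_k + γ_k ⟨I_k, y⟩) y_m` and the death flow `b = (μ_k + γ_k) (m_k + 1) y_{m+e_k}`,
and `V(y)_n` is the flux into `n` minus the flux out of `n`. The partial derivatives of `g` form a
potential `G` with `G(m + e_k) - G(m) = log b - log a`, so summation by parts along the edges gives
`⟨V(y), ∇g(y)⟩ = ∑ (a - b) (log b - log a)`. Every term is `≤ 0` and vanishes only when `a = b`;
hence `⟨V(y), ∇g(y)⟩ = 0` forces all fluxes to vanish, and then `V(y) = 0`.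
-/

theorem Real.sub_mul_log_sub_log_nonneg {a b : ℝ} (ha : 0 < a) (hb : 0 < b) :
    0 ≤ (a - b) * (Real.log a - Real.log b) := by
  rcases le_total a b with h | h
  · exact mul_nonneg_of_nonpos_of_nonpos (sub_nonpos.2 h)
      (sub_nonpos.2 (Real.log_le_log ha h))
  · exact mul_nonneg (sub_nonneg.2 h) (sub_nonneg.2 (Real.log_le_log hb h))

theorem Real.sub_mul_log_sub_log_eq_zero_iff {a b : ℝ} (ha : 0 < a) (hb : 0 < b) :
    (a - b) * (Real.log a - Real.log b) = 0 ↔ a = b := by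
  refine ⟨fun h => ?_, fun h => by rw [h, sub_self, zero_mul]⟩
  rcases mul_eq_zero.1 h with h | h
  · exact sub_eq_zero.1 h
  · exact Real.log_injOn_pos ha hb (sub_eq_zero.1 h)

theorem hasDerivAt_mul_log_const_mul {c t : ℝ} (hc : c ≠ 0) (ht : t ≠ 0) :
    HasDerivAt (fun s => s * Real.log (c * s)) (Real.log (c * t) + 1) t := by
  have hlog : HasDerivAt (fun s => Real.log (c * s)) (c / (c * t)) t :=
    ((hasDerivAt_id t).const_mul c).log (by simpa using mul_ne_zero hc ht) |>.congr_deriv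
      (by simp)
  refine ((hasDerivAt_id' t).mul hlog).congr_deriv ?_
  field_simp

theorem hasDerivAt_integral_log_affine_div {a b c s : ℝ} (ha : 0 < a) (hb : 0 ≤ b)
    (hc : c ≠ 0) (hs : 0 ≤ s) :
    HasDerivAt (fun u => ∫ x in (0 : ℝ)..u, Real.log ((a + b * x) / c))
      (Real.log ((a + b * s) / c)) s := by
  have hcont : ∀ x, 0 ≤ x → ContinuousAt (fun x => Real.log ((a + b * x) / c)) x :=
    fun x hx => ((continuousAt_const.add (continuousAt_id.const_mul b)).div_const c).log
      (div_ne_zero (add_pos_of_pos_of_nonneg ha (mul_nonneg hb hx)).ne' hc)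
  refine intervalIntegral.integral_hasDerivAt_right ?_ ?_ (hcont s hs)
  · refine ContinuousOn.intervalIntegrable fun x hx => (hcont x ?_).continuousWithinAt
    rw [Set.uIcc_of_le hs] at hx
    exact hx.1
  · exact (by fun_prop : Measurable fun x => Real.log ((a + b * x) / c)).stronglyMeasurable
      |>.stronglyMeasurableAtFilter

theorem prod_factorial_add_single {ι : Type*} [Fintype ι] [DecidableEq ι] (m : ι → ℕ) (k : ι) :
    ∏ j, ((m + Pi.single k 1 : ι → ℕ) j).factorial = (m k + 1) * ∏ j, (m j).factorial := by
  have hj : ∀ j, ((m + Pi.single k 1 : ι → ℕ) j).factorial =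
      (m j).factorial * if j = k then m k + 1 else 1 := by
    intro j
    by_cases h : j = k
    · subst h; simp [Nat.factorial_succ, mul_comm]
    · simp [h]
  simp only [hj, Finset.prod_mul_distrib, Finset.prod_ite_eq', Finset.mem_univ, if_true, mul_comm]

theorem Pi.single_le_iff {ι α : Type*} [DecidableEq ι] [AddCommMonoid α] [PartialOrder α]
    [CanonicallyOrderedAdd α] {f : ι → α} {i : ι} {a : α} :
    Pi.single i a ≤ f ↔ a ≤ f i := by
  refine ⟨fun h => by simpa using h i, fun h j => ?_⟩
  by_cases hj : j = i
  · subst hj; simpa using h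
  · simp [hj]

theorem Finset.sum_filter_le_tsub {α M : Type*} [AddCommMonoid α] [PartialOrder α]
    [CanonicallyOrderedAdd α] [Sub α] [OrderedSub α] [AddLeftReflectLE α] [AddCommMonoid M]
    [DecidableLE α] {S : Finset α} (hS : ∀ n ∈ S, ∀ m ≤ n, m ∈ S) (d : α) (f : α → M)
    (hf : ∀ m, m + d ∉ S → f m = 0) :
    ∑ n ∈ S with d ≤ n, f (n - d) = ∑ m ∈ S, f m := by
  classical
  rw [← Finset.sum_filter_of_ne (p := fun m => m + d ∈ S) fun m _ hm => not_imp_comm.1 (hf m) hm]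
  refine Finset.sum_nbij' (· - d) (· + d) (fun n hn => ?_) (fun m hm => ?_) (fun n hn => ?_)
    (fun m _ => add_tsub_cancel_right m d) (fun _ _ => rfl)
  · simp only [Finset.mem_filter] at hn ⊢
    exact ⟨hS n hn.1 _ tsub_le_self, by rw [tsub_add_cancel_of_le hn.2]; exact hn.1⟩
  · simp only [Finset.mem_filter] at hm ⊢
    exact ⟨hm.2, le_add_self⟩
  · simp only [Finset.mem_filter] at hn
    exact tsub_add_cancel_of_le hn.2

section BirthDeath

variable {K C : ℕ} {A : Fin K → ℕ}

theorem mem_XF_of_le {m n : Fin K → ℕ} (hmn : m ≤ n) (hn : n ∈ XF K C A) : m ∈ XF K C A := by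
  simp only [XF, Finset.mem_filter, Fintype.mem_piFinset, Finset.mem_range] at hn ⊢
  exact ⟨fun j => (hmn j).trans_lt (hn.1 j),
    (Finset.sum_le_sum fun j _ => Nat.mul_le_mul_left _ (hmn j)).trans hn.2⟩

theorem ye_coe (y : XF K C A → ℝ) (n : XF K C A) : ye K C A y n = y n := dif_pos n.2

theorem ye_pos {y : XF K C A → ℝ} (hy : ∀ n, 0 < y n) {m : Fin K → ℕ} (hm : m ∈ XF K C A) :
    0 < ye K C A y m := by
  rw [ye, dif_pos hm]
  exact hy _

theorem avgS_nonneg {y : XF K C A → ℝ} (hy : ∀ n, 0 ≤ y n) (k : Fin K) : 0 ≤ avgS K C A y k :=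
  Finset.sum_nonneg fun n _ => mul_nonneg (Nat.cast_nonneg _) (hy n)

theorem sub_single_add_single {m : Fin K → ℕ} {k : Fin K} (hk : 1 ≤ m k) :
    m - Pi.single k 1 + Pi.single k 1 = m :=
  tsub_add_cancel_of_le (Pi.single_le_iff.2 hk)

variable (lam gam mu : Fin K → ℝ) (y : XF K C A → ℝ)

noncomputable def flux (m : Fin K → ℕ) (k : Fin K) : ℝ :=
  if m + Pi.single k 1 ∈ XF K C A then
    (lam k + gam k * avgS K C A y k) * ye K C A y m
      - (gam k + mu k) * ((m k : ℝ) + 1) * ye K C A y (m + Pi.single k 1)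
  else 0

noncomputable def fluxBalance (m : Fin K → ℕ) : ℝ :=
  ∑ k, ((if 1 ≤ m k then flux lam gam mu y (m - Pi.single k 1) k else 0) - flux lam gam mu y m k)

theorem Vs_eq_fluxBalance (n : XF K C A) :
    Vs K C A lam gam mu y n = fluxBalance lam gam mu y n.1 := by
  rw [Vs, fluxBalance, ← Finset.sum_add_distrib]
  refine Finset.sum_congr rfl fun k _ => ?_
  by_cases hk : 1 ≤ n.1 k
  · have hcast : (((n.1 - Pi.single k 1 : Fin K → ℕ) k : ℕ) : ℝ) + 1 = n.1 k := by
      rw [Pi.sub_apply, Pi.single_eq_same, Nat.cast_sub hk]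
      ring
    simp only [flux, if_pos hk, sub_single_add_single hk, n.2, if_true, ye_coe, hcast]
    split_ifs <;> ring
  · have hzero : (n.1 k : ℝ) = 0 := by exact_mod_cast Nat.lt_one_iff.1 (not_le.1 hk)
    simp only [flux, if_neg hk, ye_coe, hzero]
    split_ifs <;> ring

noncomputable def potential (m : Fin K → ℕ) : ℝ :=
  Real.log ((∏ k, ((m k).factorial : ℝ)) * ye K C A y m) + 1
    - ∑ k, (m k : ℝ) * Real.log ((lam k + gam k * avgS K C A y k) / (mu k + gam k))

theorem hasFDerivAt_avgS (k : Fin K) :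
    HasFDerivAt (fun z => avgS K C A z k)
      (∑ n : XF K C A, (n.1 k : ℝ) • (ContinuousLinearMap.proj n : (XF K C A → ℝ) →L[ℝ] ℝ)) y :=
  HasFDerivAt.fun_sum fun n _ => (hasFDerivAt_apply (𝕜 := ℝ) n y).const_mul _

variable {lam gam mu y}

theorem sum_Vs_mul_eq_sum_flux_mul_sub (G : (Fin K → ℕ) → ℝ) :
    ∑ n : XF K C A, Vs K C A lam gam mu y n * G n =
      ∑ k, ∑ m ∈ XF K C A, flux lam gam mu y m k * (G (m + Pi.single k 1) - G m) := by
  classical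
  simp_rw [Vs_eq_fluxBalance]
  rw [Finset.sum_coe_sort (XF K C A) fun m => fluxBalance lam gam mu y m * G m]
  simp_rw [fluxBalance, Finset.sum_mul]
  rw [Finset.sum_comm]
  refine Finset.sum_congr rfl fun k _ => ?_
  simp_rw [sub_mul, mul_sub, Finset.sum_sub_distrib]
  congr 1
  calc ∑ m ∈ XF K C A, (if 1 ≤ m k then flux lam gam mu y (m - Pi.single k 1) k else 0) * G m
      = ∑ m ∈ XF K C A with Pi.single k 1 ≤ m,
          flux lam gam mu y (m - Pi.single k 1) k * G (m - Pi.single k 1 + Pi.single k 1) := by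
        rw [Finset.sum_filter]
        refine Finset.sum_congr rfl fun m _ => ?_
        by_cases hk : 1 ≤ m k
        · rw [if_pos hk, if_pos (Pi.single_le_iff.2 hk), sub_single_add_single hk]
        · rw [if_neg hk, if_neg (mt Pi.single_le_iff.1 hk), zero_mul]
    _ = ∑ m ∈ XF K C A, flux lam gam mu y m k * G (m + Pi.single k 1) :=
        Finset.sum_filter_le_tsub (fun _ hn _ hmn => mem_XF_of_le hmn hn) _
          (fun m => flux lam gam mu y m k * G (m + Pi.single k 1))
          (fun m hm => by rw [flux, if_neg hm, zero_mul])

theorem birthRate_pos (hlam : ∀ k, 0 < lam k) (hgam : ∀ k, 0 < gam k) (hy : ∀ n, 0 < y n)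
    (k : Fin K) : 0 < lam k + gam k * avgS K C A y k :=
  add_pos_of_pos_of_nonneg (hlam k) (mul_nonneg (hgam k).le (avgS_nonneg (fun n => (hy n).le) k))

theorem hasFDerivAt_gE (hlam : ∀ k, 0 < lam k) (hgam : ∀ k, 0 < gam k) (hmu : ∀ k, 0 ≤ mu k)
    (hy : ∀ n, 0 < y n) :
    HasFDerivAt (gE K C A lam gam mu)
      (∑ n : XF K C A, (Real.log ((∏ k, ((n.1 k).factorial : ℝ)) * y n) + 1) •
          (ContinuousLinearMap.proj n : (XF K C A → ℝ) →L[ℝ] ℝ)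
        - ∑ k, Real.log ((lam k + gam k * avgS K C A y k) / (mu k + gam k)) •
          ∑ n : XF K C A, (n.1 k : ℝ) •
            (ContinuousLinearMap.proj n : (XF K C A → ℝ) →L[ℝ] ℝ)) y := by
  refine (HasFDerivAt.fun_sum fun n _ => ?_).sub (HasFDerivAt.fun_sum fun k _ => ?_)
  · have hc : (∏ k, ((n.1 k).factorial : ℝ)) ≠ 0 := by positivity
    exact (hasDerivAt_mul_log_const_mul hc (hy n).ne').comp_hasFDerivAt y
      (hasFDerivAt_apply (𝕜 := ℝ) n y)
  · exact (hasDerivAt_integral_log_affine_div (hlam k) (hgam k).le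
      (add_pos_of_nonneg_of_pos (hmu k) (hgam k)).ne'
      (avgS_nonneg (fun n => (hy n).le) k)).comp_hasFDerivAt y (hasFDerivAt_avgS y k)

theorem fderiv_gE_single (hlam : ∀ k, 0 < lam k) (hgam : ∀ k, 0 < gam k) (hmu : ∀ k, 0 ≤ mu k)
    (hy : ∀ n, 0 < y n) (n : XF K C A) :
    fderiv ℝ (gE K C A lam gam mu) y (Pi.single n 1) = potential lam gam mu y n.1 := by
  rw [(hasFDerivAt_gE hlam hgam hmu hy).fderiv]
  simp [potential, ye_coe, Pi.single_apply, mul_comm]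

theorem potential_add_single_sub (hlam : ∀ k, 0 < lam k) (hgam : ∀ k, 0 < gam k)
    (hmu : ∀ k, 0 ≤ mu k) (hy : ∀ n, 0 < y n) {m : Fin K → ℕ} {k : Fin K}
    (hm : m + Pi.single k 1 ∈ XF K C A) :
    potential lam gam mu y (m + Pi.single k 1) - potential lam gam mu y m =
      Real.log ((gam k + mu k) * ((m k : ℝ) + 1) * ye K C A y (m + Pi.single k 1))
        - Real.log ((lam k + gam k * avgS K C A y k) * ye K C A y m) := by
  have hy₁ := ye_pos hy hm
  have hy₀ := ye_pos hy (mem_XF_of_le le_self_add hm)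
  have hrate := birthRate_pos hlam hgam hy k
  have hdeath : 0 < mu k + gam k := add_pos_of_nonneg_of_pos (hmu k) (hgam k)
  have hfact : (0 : ℝ) < ∏ j, ((m j).factorial : ℝ) := by positivity
  have hcount : ∑ j, (((m + Pi.single k 1 : Fin K → ℕ) j : ℕ) : ℝ) *
        Real.log ((lam j + gam j * avgS K C A y j) / (mu j + gam j)) =
      ∑ j, (m j : ℝ) * Real.log ((lam j + gam j * avgS K C A y j) / (mu j + gam j))
        + Real.log ((lam k + gam k * avgS K C A y k) / (mu k + gam k)) := by
    simp [Pi.single_apply, add_mul, Finset.sum_add_distrib]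
  have hprod : ∏ j, (((m + Pi.single k 1 : Fin K → ℕ) j).factorial : ℝ) =
      ((m k : ℝ) + 1) * ∏ j, ((m j).factorial : ℝ) := by
    exact_mod_cast prod_factorial_add_single m k
  rw [potential, potential, hcount, hprod, add_comm (gam k), mul_assoc, mul_assoc,
    Real.log_mul (by positivity) (mul_pos hfact hy₁).ne', Real.log_mul hfact.ne' hy₁.ne',
    Real.log_mul hfact.ne' hy₀.ne', Real.log_div hrate.ne' hdeath.ne',
    Real.log_mul hdeath.ne' (by positivity), Real.log_mul (by positivity) hy₁.ne',
    Real.log_mul hrate.ne' hy₀.ne']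
  ring

theorem exists_flux_eq_sub_and_potential_sub_eq (hlam : ∀ k, 0 < lam k) (hgam : ∀ k, 0 < gam k)
    (hmu : ∀ k, 0 ≤ mu k) (hy : ∀ n, 0 < y n) {m : Fin K → ℕ} {k : Fin K}
    (hm : m + Pi.single k 1 ∈ XF K C A) :
    ∃ a b : ℝ, 0 < a ∧ 0 < b ∧ flux lam gam mu y m k = a - b ∧
      potential lam gam mu y (m + Pi.single k 1) - potential lam gam mu y m =
        Real.log b - Real.log a :=
  ⟨_, _, mul_pos (birthRate_pos hlam hgam hy k) (ye_pos hy (mem_XF_of_le le_self_add hm)),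
    mul_pos (mul_pos (add_pos_of_pos_of_nonneg (hgam k) (hmu k)) (Nat.cast_add_one_pos (m k)))
      (ye_pos hy hm),
    by rw [flux, if_pos hm], potential_add_single_sub hlam hgam hmu hy hm⟩

theorem flux_mul_potential_sub_nonpos (hlam : ∀ k, 0 < lam k) (hgam : ∀ k, 0 < gam k)
    (hmu : ∀ k, 0 ≤ mu k) (hy : ∀ n, 0 < y n) (m : Fin K → ℕ) (k : Fin K) :
    flux lam gam mu y m k *
      (potential lam gam mu y (m + Pi.single k 1) - potential lam gam mu y m) ≤ 0 := by
  by_cases hm : m + Pi.single k 1 ∈ XF K C A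
  · obtain ⟨a, b, ha, hb, hflux, hpot⟩ :=
      exists_flux_eq_sub_and_potential_sub_eq hlam hgam hmu hy hm
    rw [hflux, hpot]
    linarith [Real.sub_mul_log_sub_log_nonneg ha hb]
  · rw [flux, if_neg hm, zero_mul]

theorem flux_mul_potential_sub_eq_zero_iff (hlam : ∀ k, 0 < lam k) (hgam : ∀ k, 0 < gam k)
    (hmu : ∀ k, 0 ≤ mu k) (hy : ∀ n, 0 < y n) (m : Fin K → ℕ) (k : Fin K) :
    flux lam gam mu y m k *
        (potential lam gam mu y (m + Pi.single k 1) - potential lam gam mu y m) = 0 ↔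
      flux lam gam mu y m k = 0 := by
  by_cases hm : m + Pi.single k 1 ∈ XF K C A
  · obtain ⟨a, b, ha, hb, hflux, hpot⟩ :=
      exists_flux_eq_sub_and_potential_sub_eq hlam hgam hmu hy hm
    rw [hflux, hpot, ← neg_sub (Real.log a), mul_neg, neg_eq_zero,
      Real.sub_mul_log_sub_log_eq_zero_iff ha hb, sub_eq_zero]
  · simp only [flux, if_neg hm, zero_mul]

end BirthDeath

theorem lyapunov_zero_iff_equilibrium_general (K C : ℕ)
    (A : Fin K → ℕ)
    (lam gam mu : Fin K → ℝ)
    (hlam : ∀ k, 0 < lam k) (hgam : ∀ k, 0 < gam k) (hmu : ∀ k, 0 ≤ mu k)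
    (y : XF K C A → ℝ) (hy : ∀ n, 0 < y n) :
    (∑ n : XF K C A, Vs K C A lam gam mu y n *
        fderiv ℝ (gE K C A lam gam mu) y (Pi.single n 1)) = 0 ↔
      ∀ n : XF K C A, Vs K C A lam gam mu y n = 0 := by
  refine ⟨fun h n => ?_, fun h => Finset.sum_eq_zero fun n _ => by rw [h n, zero_mul]⟩
  simp_rw [fderiv_gE_single hlam hgam hmu hy, sum_Vs_mul_eq_sum_flux_mul_sub] at h
  have hterm := flux_mul_potential_sub_nonpos hlam hgam hmu hy
  have hflux : ∀ m k, flux lam gam mu y m k = 0 := by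
    intro m k
    by_cases hm : m ∈ XF K C A
    · rw [← flux_mul_potential_sub_eq_zero_iff hlam hgam hmu hy]
      refine (Finset.sum_eq_zero_iff_of_nonpos fun m _ => hterm m k).1 ?_ m hm
      exact (Finset.sum_eq_zero_iff_of_nonpos fun k _ =>
        Finset.sum_nonpos fun m _ => hterm m k).1 h k (Finset.mem_univ k)
    · rw [flux, if_neg fun h' => hm (mem_XF_of_le le_self_add h')]
  simp [Vs_eq_fluxBalance, fluxBalance, hflux]

/-- For `y` in the interior of `P(X)`, `⟨V(y), ∇g(y)⟩ = 0` iff `V(y) = 0`. -/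
theorem lyapunov_zero_iff_equilibrium (K C : ℕ) (hK : 0 < K) (hC : 0 < C)
    (A : Fin K → ℕ) (hA : ∀ k, 0 < A k)
    (lam gam mu : Fin K → ℝ)
    (hlam : ∀ k, 0 < lam k) (hgam : ∀ k, 0 < gam k) (hmu : ∀ k, 0 ≤ mu k)
    (y : XF K C A → ℝ) (hy : ∀ n, 0 < y n) (hysum : ∑ n : XF K C A, y n = 1) :
    (∑ n : XF K C A, Vs K C A lam gam mu y n *
        fderiv ℝ (gE K C A lam gam mu) y (Pi.single n 1)) = 0 ↔
      ∀ n : XF K C A, Vs K C A lam gam mu y n = 0 :=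
  lyapunov_zero_iff_equilibrium_general K C A lam gam mu hlam hgam hmu y hy
end

section
/- With the notation of the previous item, if moreover ρ̄_2 < (ρ̄_1 − 1)e^{ρ̄_1}, then ∂²φ̃/∂ρ_1²(ρ̄) < 0 and ∂²φ̃/∂ρ_2²(ρ̄) > 0, so ρ̄ is a saddle-type critical point of φ̃. -/
/-- The energy function `φ̃` of the two-class network with `C = ∞`:
`φ̃(ρ₁,ρ₂) = −log(ρ₂ + e^{ρ₁}) + ρ₁ + ρ₂ − λ₁ log ρ₁ − λ₂ log ρ₂`. -/
noncomputable def phiT (l1 l2 : ℝ) (r1 r2 : ℝ) : ℝ :=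
  -Real.log (r2 + Real.exp r1) + r1 + r2 - l1 * Real.log r1 - l2 * Real.log r2

/-!
Both pure second partials are explicit:
`∂²φ̃/∂ρ₁² = λ₁/ρ₁² − ρ₂ e^{ρ₁}/(ρ₂ + e^{ρ₁})²` and
`∂²φ̃/∂ρ₂² = 1/(ρ₂ + e^{ρ₁})² + λ₂/ρ₂²`.
At `ρ̄`, substituting `λ₁` turns the first into
`ρ̄₂ (ρ̄₂ + e^{ρ̄₁} − ρ̄₁ e^{ρ̄₁}) / (ρ̄₁ (ρ̄₂ + e^{ρ̄₁})²)`,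
negative exactly when `ρ̄₂ < (ρ̄₁ − 1) e^{ρ̄₁}`;
the second is positive because `λ₂ > 0` once `e^{ρ̄₁} > 1`.
-/

open Real Filter Topology

theorem deriv_deriv_eq_of_eventually_hasDerivAt {𝕜 F : Type*} [NontriviallyNormedField 𝕜]
    [NormedAddCommGroup F] [NormedSpace 𝕜 F] {f f' : 𝕜 → F} {x : 𝕜} {f'' : F}
    (hf : ∀ᶠ t in 𝓝 x, HasDerivAt f (f' t) t) (hf' : HasDerivAt f' f'' x) :
    deriv (deriv f) x = f'' := by
  have hderiv : deriv f =ᶠ[𝓝 x] f' := hf.mono fun _ ht => ht.deriv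
  rw [hderiv.deriv_eq, hf'.deriv]

section PartialDerivatives

variable (l1 l2 : ℝ)

theorem hasDerivAt_phiT_fst {r2 t : ℝ} (ht : t ≠ 0) (hS : r2 + exp t ≠ 0) :
    HasDerivAt (fun s => phiT l1 l2 s r2) (1 - exp t / (r2 + exp t) - l1 / t) t := by
  have hlog : HasDerivAt (fun s => log (r2 + exp s)) (exp t / (r2 + exp t)) t :=
    ((hasDerivAt_exp t).const_add r2).log hS
  refine ((((hlog.neg.add (hasDerivAt_id t)).add_const r2).sub
    ((hasDerivAt_log ht).const_mul l1)).sub_const (l2 * log r2)).congr_deriv ?_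
  ring

theorem hasDerivAt_phiT_snd {r1 t : ℝ} (ht : t ≠ 0) (hS : t + exp r1 ≠ 0) :
    HasDerivAt (fun s => phiT l1 l2 r1 s) (1 - (t + exp r1)⁻¹ - l2 / t) t := by
  have hlog : HasDerivAt (fun s => log (s + exp r1)) (1 / (t + exp r1)) t :=
    ((hasDerivAt_id t).add_const (exp r1)).log hS
  refine ((((hlog.neg.add_const r1).add (hasDerivAt_id t)).sub_const (l1 * log r1)).sub
    ((hasDerivAt_log ht).const_mul l2)).congr_deriv ?_
  ring

theorem hasDerivAt_deriv_phiT_fst {r2 t : ℝ} (ht : t ≠ 0) (hS : r2 + exp t ≠ 0) :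
    HasDerivAt (fun s => 1 - exp s / (r2 + exp s) - l1 / s)
      (l1 / t ^ 2 - r2 * exp t / (r2 + exp t) ^ 2) t := by
  refine ((((hasDerivAt_exp t).fun_div ((hasDerivAt_exp t).const_add r2) hS).const_sub 1).sub
    ((hasDerivAt_inv ht).const_mul l1)).congr_deriv ?_
  field_simp
  ring

theorem hasDerivAt_deriv_phiT_snd {r1 t : ℝ} (ht : t ≠ 0) (hS : t + exp r1 ≠ 0) :
    HasDerivAt (fun s => 1 - (s + exp r1)⁻¹ - l2 / s)
      (1 / (t + exp r1) ^ 2 + l2 / t ^ 2) t := by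
  refine (((((hasDerivAt_id' t).add_const (exp r1)).fun_inv hS).const_sub 1).sub
    ((hasDerivAt_inv ht).const_mul l2)).congr_deriv ?_
  field_simp
  ring

theorem deriv_deriv_phiT_fst {r2 t : ℝ} (ht : t ≠ 0) (hS : r2 + exp t ≠ 0) :
    deriv (deriv fun s => phiT l1 l2 s r2) t =
      l1 / t ^ 2 - r2 * exp t / (r2 + exp t) ^ 2 := by
  have hS' : ∀ᶠ s in 𝓝 t, r2 + exp s ≠ 0 :=
    (continuous_exp.const_add r2).continuousAt.eventually_ne hS
  refine deriv_deriv_eq_of_eventually_hasDerivAt ?_ (hasDerivAt_deriv_phiT_fst l1 ht hS)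
  filter_upwards [eventually_ne_nhds ht, hS'] with s hs hSs
  exact hasDerivAt_phiT_fst l1 l2 hs hSs

theorem deriv_deriv_phiT_snd {r1 t : ℝ} (ht : t ≠ 0) (hS : t + exp r1 ≠ 0) :
    deriv (deriv fun s => phiT l1 l2 r1 s) t = 1 / (t + exp r1) ^ 2 + l2 / t ^ 2 := by
  have hS' : ∀ᶠ s in 𝓝 t, s + exp r1 ≠ 0 :=
    (continuous_add_const _).continuousAt.eventually_ne hS
  refine deriv_deriv_eq_of_eventually_hasDerivAt ?_ (hasDerivAt_deriv_phiT_snd l2 ht hS)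
  filter_upwards [eventually_ne_nhds ht, hS'] with s hs hSs
  exact hasDerivAt_phiT_snd l1 l2 hs hSs

end PartialDerivatives

/-- If `ρ̄₂ < (ρ̄₁ − 1)e^{ρ̄₁}`, then `∂²φ̃/∂ρ₁²(ρ̄) < 0` and `∂²φ̃/∂ρ₂²(ρ̄) > 0`,
so `ρ̄` is a saddle-type critical point of `φ̃`. -/
theorem saddle_phiT (b1 b2 : ℝ) (hb1 : 1 < b1) (hb2 : 0 < b2)
    (hsaddle : b2 < (b1 - 1) * Real.exp b1)
    (l1 l2 : ℝ)
    (hl1 : l1 = b1 * b2 / (b2 + Real.exp b1))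
    (hl2 : l2 = b2 * (b2 + Real.exp b1 - 1) / (b2 + Real.exp b1)) :
    deriv (deriv (fun t : ℝ => phiT l1 l2 t b2)) b1 < 0 ∧
    0 < deriv (deriv (fun t : ℝ => phiT l1 l2 b1 t)) b2 := by
  have hb1_pos : 0 < b1 := by linarith
  have hS : 0 < b2 + exp b1 := by positivity
  rw [deriv_deriv_phiT_fst l1 l2 hb1_pos.ne' hS.ne', deriv_deriv_phiT_snd l1 l2 hb2.ne' hS.ne']
  constructor
  · have hvalue : l1 / b1 ^ 2 - b2 * exp b1 / (b2 + exp b1) ^ 2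
        = b2 * (b2 + exp b1 - b1 * exp b1) / (b1 * (b2 + exp b1) ^ 2) := by
      rw [hl1]
      field_simp
    rw [hvalue]
    exact div_neg_of_neg_of_pos (mul_neg_of_pos_of_neg hb2 (by linarith)) (by positivity)
  · have hl2_pos : 0 < l2 := by
      have hexp : 1 < exp b1 := one_lt_exp_iff.mpr hb1_pos
      rw [hl2]
      exact div_pos (mul_pos hb2 (by linarith)) hS
    positivity
end
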